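/- arXiv:2411.11209 — 2 statements merged into one kernel-verified Lean document; each statement's English description precedes it below -/
import Mathlib

section
/- Let b > 0, c ∈ ℝ and define ψ(x) = (b x³ + (1 - 4b) x + c)/(4 - 3x²). If x* satisfies |x*| > 2/√3 and ψ(x*) = 0, then ψ'(x*) < 0; that is, every equilibrium lying on the outer branches C₀L ∪ C₀R of the critical manifold attracts the slow flow when b > 0. -/
/-! At an equilibrium the numerator `N(x) = b x³ + (1 - 4b) x + c` of `ψ` vanishes, so
`ψ'(x*) = N'(x*) / (4 - 3x*²)`. On the outer branches `x*² > 4/3`, hence the denominator is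
negative while `N'(x*) = 3b (x*² - 4/3) + 1 > 0` for `b > 0`. -/

theorem HasDerivAt.div_of_eq_zero {𝕜 : Type*} [NontriviallyNormedField 𝕜] {f g : 𝕜 → 𝕜}
    {f' g' x : 𝕜} (hf : HasDerivAt f f' x) (hg : HasDerivAt g g' x) (hgx : g x ≠ 0) (hfx : f x = 0) :
    HasDerivAt (fun y => f y / g y) (f' / g x) x := by
  refine (hf.div hg hgx).congr_deriv ?_
  rw [hfx, zero_mul, sub_zero, sq, mul_div_mul_right _ _ hgx]

theorem four_thirds_lt_sq_of_two_div_sqrt_three_lt_abs {x : ℝ} (hx : 2 / Real.sqrt 3 < |x|) :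
    4 / 3 < x ^ 2 := by
  have h := pow_lt_pow_left₀ hx (by positivity) two_ne_zero
  rw [div_pow, Real.sq_sqrt zero_le_three, sq_abs] at h
  norm_num at h
  exact h

/-- for `b > 0` and `ψ(x) = (b x³ + (1 - 4b) x + c)/(4 - 3x²)`,
every zero `x*` of `ψ` with `|x*| > 2/√3` (i.e. on the outer branches of the
critical manifold) satisfies `ψ'(x*) < 0`, so it attracts the slow flow. -/
theorem fhn_outer_equilibria_attract_slow_flow (b c xs : ℝ)
    (hb : 0 < b)
    (hx : |xs| > 2/Real.sqrt 3)
    (hzero : (b*xs^3 + (1 - 4*b)*xs + c) / (4 - 3*xs^2) = 0) :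
    deriv (fun x => (b*x^3 + (1 - 4*b)*x + c) / (4 - 3*x^2)) xs < 0 := by
  have hsq := four_thirds_lt_sq_of_two_div_sqrt_three_lt_abs hx
  have hden : 4 - 3 * xs ^ 2 < 0 := by linarith
  have hnum : b*xs^3 + (1 - 4*b)*xs + c = 0 :=
    (div_eq_zero_iff.mp hzero).resolve_right hden.ne
  have hN : HasDerivAt (fun x : ℝ => b*x^3 + (1 - 4*b)*x + c) (3*b*xs^2 + (1 - 4*b)) xs := by
    refine ((((hasDerivAt_pow 3 xs).const_mul b).add
      ((hasDerivAt_id xs).const_mul (1 - 4*b))).add_const c).congr_deriv ?_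
    norm_num
    ring
  have hD : HasDerivAt (fun x : ℝ => 4 - 3*x^2) (-(3 * (2 * xs))) xs := by
    simpa using ((hasDerivAt_pow 2 xs).const_mul 3).const_sub 4
  rw [(hN.div_of_eq_zero hD hden.ne hnum).deriv]
  have hN' : 0 < 3*b*xs^2 + (1 - 4*b) := by nlinarith
  exact div_neg_of_pos_of_neg hN' hden
end

section
/- Let T > 0 and let x : [0, T] → ℝ be continuous, differentiable on (0, T), with 2/√3 ≤ x(τ) ≤ 4/√3 for all τ, x(0) = 4/√3, x(T) = 2/√3, and x'(τ) (4 - 3 x(τ)²) = x(τ) for all τ ∈ (0, T). Then T = 6 - 4 log 2. -/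
/-!
Along the slow flow `ẋ = x / (4 - 3x²)` the time is `dτ = (4 - 3x²)/x dx`, so
`F(u) = 4 log u - (3/2) u²` is a first integral up to time: `F(x(τ)) - τ` is constant.
Hence the passage time from `D` to the fold `P₊` is
`F(2/√3) - F(4/√3) = -4 log 2 - (3/2)(4/3 - 16/3) = 6 - 4 log 2`.
-/

open Real Set

noncomputable def slowFlowPrimitive (u : ℝ) : ℝ := 4 * log u - 3 / 2 * u ^ 2

lemma hasDerivAt_slowFlowPrimitive {u : ℝ} (hu : u ≠ 0) :
    HasDerivAt slowFlowPrimitive (4 / u - 3 * u) u := by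
  refine (((hasDerivAt_log hu).const_mul 4).fun_sub
    ((hasDerivAt_pow 2 u).const_mul (3 / 2))).congr_deriv ?_
  simp only [Nat.cast_ofNat, div_eq_mul_inv]
  ring

lemma sub_eq_mul_of_hasDerivAt_const {f : ℝ → ℝ} {k a b : ℝ} (hab : a < b)
    (hf : ContinuousOn f (Icc a b)) (hf' : ∀ t ∈ Ioo a b, HasDerivAt f k t) :
    f b - f a = k * (b - a) := by
  obtain ⟨c, -, hc⟩ := exists_hasDerivAt_eq_slope f (fun _ => k) hab hf hf'
  rw [hc, div_mul_cancel₀ _ (sub_ne_zero.mpr hab.ne')]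

lemma slowFlowPrimitive_sub_eq_sub {x : ℝ → ℝ} {a b : ℝ} (hab : a < b)
    (hcont : ContinuousOn x (Icc a b)) (hpos : ∀ t ∈ Icc a b, 0 < x t)
    (hdiff : ∀ t ∈ Ioo a b, DifferentiableAt ℝ x t)
    (hode : ∀ t ∈ Ioo a b, deriv x t * (4 - 3 * x t ^ 2) = x t) :
    slowFlowPrimitive (x b) - slowFlowPrimitive (x a) = b - a := by
  have hF : ContinuousOn slowFlowPrimitive (Ioi 0) := fun u hu =>
    (hasDerivAt_slowFlowPrimitive (ne_of_gt hu)).continuousAt.continuousWithinAt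
  have hFx : ∀ t ∈ Ioo a b, HasDerivAt (slowFlowPrimitive ∘ x) 1 t := by
    intro t ht
    have hxt : x t ≠ 0 := (hpos t (Ioo_subset_Icc_self ht)).ne'
    refine ((hasDerivAt_slowFlowPrimitive hxt).comp t (hdiff t ht).hasDerivAt).congr_deriv ?_
    field_simp
    linear_combination hode t ht
  simpa using sub_eq_mul_of_hasDerivAt_const hab (hF.comp hcont hpos) hFx

lemma slowFlowPrimitive_two_div_sqrt_three_sub_four_div_sqrt_three :
    slowFlowPrimitive (2 / √3) - slowFlowPrimitive (4 / √3) = 6 - 4 * log 2 := by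
  have hsq : √3 ^ 2 = 3 := sq_sqrt (by norm_num)
  have hlog : log (4 / √3) = log 2 + log (2 / √3) := by
    rw [← log_mul (by norm_num) (by positivity)]
    ring_nf
  simp only [slowFlowPrimitive, div_pow, hsq, hlog]
  ring

theorem fhn_time_on_right_branch_general (T : ℝ) (hT : 0 < T) (x : ℝ → ℝ)
    (hcont : ContinuousOn x (Set.Icc 0 T))
    (hdiff : ∀ τ ∈ Set.Ioo 0 T, DifferentiableAt ℝ x τ)
    (hlb : ∀ τ ∈ Set.Icc 0 T, 2/Real.sqrt 3 ≤ x τ)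
    (h0 : x 0 = 4/Real.sqrt 3)
    (hT' : x T = 2/Real.sqrt 3)
    (hode : ∀ τ ∈ Set.Ioo 0 T, deriv x τ * (4 - 3*(x τ)^2) = x τ) :
    T = 6 - 4 * Real.log 2 := by
  have hpos : ∀ τ ∈ Icc 0 T, 0 < x τ := fun τ hτ => lt_of_lt_of_le (by positivity) (hlb τ hτ)
  have h := slowFlowPrimitive_sub_eq_sub hT hcont hpos hdiff hode
  rw [hT', h0, slowFlowPrimitive_two_div_sqrt_three_sub_four_div_sqrt_three] at h
  linarith

/-- if `x : [0,T] → ℝ` is continuous, differentiable on `(0,T)`,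
takes values in `[2/√3, 4/√3]`, goes from `4/√3` to `2/√3`, and satisfies the
slow-flow equation `x'(τ)(4 - 3x(τ)²) = x(τ)` on `(0,T)`, then
`T = 6 - 4 log 2`. -/
theorem fhn_time_on_right_branch (T : ℝ) (hT : 0 < T) (x : ℝ → ℝ)
    (hcont : ContinuousOn x (Set.Icc 0 T))
    (hdiff : ∀ τ ∈ Set.Ioo 0 T, DifferentiableAt ℝ x τ)
    (hlb : ∀ τ ∈ Set.Icc 0 T, 2/Real.sqrt 3 ≤ x τ)
    (hub : ∀ τ ∈ Set.Icc 0 T, x τ ≤ 4/Real.sqrt 3)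
    (h0 : x 0 = 4/Real.sqrt 3)
    (hT' : x T = 2/Real.sqrt 3)
    (hode : ∀ τ ∈ Set.Ioo 0 T, deriv x τ * (4 - 3*(x τ)^2) = x τ) :
    T = 6 - 4 * Real.log 2 :=
  fhn_time_on_right_branch_general T hT x hcont hdiff hlb h0 hT' hode
end
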